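/- For every integer n ≥ 2, the number of arrangements of {1,…,n} that avoid all patterns 12, 23, …, (n−1)n but contain the pattern n1 equals D_{n−1}. -/

import Mathlib

/-- The arrangement (one-line notation) of `σ` avoids all patterns
`12, 23, …, (n-1)n`: digit `i` (encoded as the value `i-1` in `Fin n`)
is never immediately followed by digit `i+1`. -/
def avoidsSucc (n : ℕ) (σ : Equiv.Perm (Fin n)) : Prop :=
  ∀ (k : ℕ) (h : k + 1 < n),
    (σ ⟨k + 1, h⟩).val ≠ (σ ⟨k, Nat.lt_of_succ_lt h⟩).val + 1

/-- The arrangement of `σ` contains the pattern `n1`: digit `n` (value `n-1`)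
is immediately followed by digit `1` (value `0`). -/
def containsN1 (n : ℕ) (σ : Equiv.Perm (Fin n)) : Prop :=
  ∃ (k : ℕ) (h : k + 1 < n),
    (σ ⟨k, Nat.lt_of_succ_lt h⟩).val = n - 1 ∧ (σ ⟨k + 1, h⟩).val = 0

/-- `dCount n` = number of arrangements of `{1,…,n}` avoiding `12, 23, …, (n-1)n`. -/
noncomputable def dCount (n : ℕ) : ℕ :=
  Nat.card {σ : Equiv.Perm (Fin n) // avoidsSucc n σ}

/-- `DCount n` = number of arrangements of `{1,…,n}` avoiding `12, 23, …, (n-1)n, n1`. -/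
noncomputable def DCount (n : ℕ) : ℕ :=
  Nat.card {σ : Equiv.Perm (Fin n) // avoidsSucc n σ ∧ ¬ containsN1 n σ}


/-
Inserting the letter `n` immediately before the letter `1` of an arrangement `τ` of
`{1, …, n-1}` is a bijection onto the arrangements of `{1, …, n}` containing `n1`. The insertion
separates only the pair ending in `1`, which is never a succession, and creates the adjacencies
`x n` and `n 1`; of these only `x n` can be a succession, namely when `x = n-1`, i.e. when `τ`
contains the pattern `(n-1)1`. So the image avoids all successions iff `τ` avoids all successions
and `(n-1)1`.
-/

namespace Arrangement

open Equiv

def subtypeGraphEquiv {α β : Type*} (f : β → α) (Q : β → Prop) :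
    {x : α × β // x.1 = f x.2 ∧ Q x.2} ≃ {b // Q b} where
  toFun x := ⟨x.1.2, x.2.2⟩
  invFun b := ⟨(f b, b), rfl, b.2⟩
  left_inv x := Subtype.ext (Prod.ext x.2.1.symm rfl)
  right_inv _ := rfl

-- Letters are the values `0, …, N-1`; positions `j ≥ N` read `0`, which is what makes
-- `word_insertMax` hold for every `j`.
def word {N : ℕ} (σ : Perm (Fin N)) (j : ℕ) : ℕ :=
  if h : j < N then σ ⟨j, h⟩ else 0

theorem word_lt {N : ℕ} (σ : Perm (Fin (N + 1))) (j : ℕ) : word σ j < N + 1 := by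
  unfold word; split_ifs <;> simp [Fin.is_le]

theorem word_eq_zero_iff {N : ℕ} (σ : Perm (Fin (N + 1))) {j : ℕ} (hj : j < N + 1) :
    word σ j = 0 ↔ j = σ.symm 0 := by
  rw [word, dif_pos hj]
  calc (σ ⟨j, hj⟩ : ℕ) = 0 ↔ σ ⟨j, hj⟩ = 0 := Fin.val_eq_zero_iff
    _ ↔ ⟨j, hj⟩ = σ.symm 0 := σ.eq_symm_apply.symm
    _ ↔ j = σ.symm 0 := Fin.ext_iff

theorem avoidsSucc_iff_word {N : ℕ} (σ : Perm (Fin N)) :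
    avoidsSucc N σ ↔ ∀ j, j + 1 < N → word σ (j + 1) ≠ word σ j + 1 := by
  refine forall_congr' fun j => ⟨fun h hj => ?_, fun h hj => ?_⟩
  · simpa [word, hj, Nat.lt_of_succ_lt hj] using h hj
  · simpa [word, hj, Nat.lt_of_succ_lt hj] using h hj

theorem containsN1_iff_word {N : ℕ} (σ : Perm (Fin N)) :
    containsN1 N σ ↔ ∃ j, j + 1 < N ∧ word σ j = N - 1 ∧ word σ (j + 1) = 0 := by
  refine exists_congr fun j => ⟨fun ⟨hj, h⟩ => ⟨hj, ?_⟩, fun ⟨hj, h⟩ => ⟨hj, ?_⟩⟩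
  · simpa [word, hj, Nat.lt_of_succ_lt hj] using h
  · simpa [word, hj, Nat.lt_of_succ_lt hj] using h

def insertAt (w : ℕ → ℕ) (p M j : ℕ) : ℕ :=
  if j < p then w j else if j = p then M else w (j - 1)

theorem insertAt_avoids_iff {w : ℕ → ℕ} {p L : ℕ} (hp : p < L) (hw : w p = 0)
    (hzero : ∀ j < L, w j = 0 → j = p) :
    (∀ j, j + 1 < L + 1 → insertAt w p L (j + 1) ≠ insertAt w p L j + 1) ↔
      (∀ j, j + 1 < L → w (j + 1) ≠ w j + 1) ∧
        ¬ ∃ j, j + 1 < L ∧ w j = L - 1 ∧ w (j + 1) = 0 := by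
  unfold insertAt
  refine ⟨fun h => ⟨fun j hj => ?_, fun ⟨j, hj, hL, h0⟩ => ?_⟩, fun ⟨h, hn⟩ j hj => ?_⟩
  · rcases lt_trichotomy (j + 1) p with hjp | hjp | hjp
    · simpa [hjp, Nat.lt_of_succ_lt hjp] using h j (by omega)
    · rw [hjp, hw]; omega
    · simpa [show ¬ j + 2 < p by omega, show j + 2 ≠ p by omega, show ¬ j + 1 < p by omega,
        show j + 1 ≠ p by omega] using h (j + 1) (by omega)
  · obtain rfl := hzero (j + 1) hj h0
    have := h j (by omega)
    simp only [lt_add_iff_pos_right, Nat.lt_irrefl, if_true, hL, Nat.lt_succ_self, if_false] at this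
    omega
  · rcases lt_trichotomy (j + 1) p with hjp | hjp | hjp
    · simpa [hjp, Nat.lt_of_succ_lt hjp] using h j (by omega)
    · subst hjp
      simp only [Nat.lt_irrefl, if_false, if_true, Nat.lt_succ_self]
      rintro hL
      exact hn ⟨j, hp, by omega, hw⟩
    · rcases Nat.lt_or_ge p j with hpj | hpj
      · obtain ⟨i, rfl⟩ : ∃ i, j = i + 1 := ⟨j - 1, by omega⟩
        simpa [show ¬ i + 2 < p by omega, show i + 2 ≠ p by omega, show ¬ i + 1 < p by omega,
          show i + 1 ≠ p by omega] using h i (by omega)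
      · obtain rfl : j = p := by omega
        simp [hw]

theorem insertAt_contains_iff {w : ℕ → ℕ} {p L : ℕ} (hw : ∀ j, w j < L) :
    (∃ j, j + 1 < L + 1 ∧ insertAt w p L j = L ∧ insertAt w p L (j + 1) = 0) ↔
      p < L ∧ w p = 0 := by
  have hL : ∀ j, insertAt w p L j = L ↔ j = p := fun j => by
    unfold insertAt; split_ifs <;> simp_all [Nat.ne_of_lt, (hw _).ne]
  constructor
  · rintro ⟨j, hj, hjL, h0⟩
    obtain rfl := (hL j).1 hjL
    simpa [insertAt] using And.intro hj h0
  · rintro ⟨hp, h0⟩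
    exact ⟨p, by omega, (hL p).2 rfl, by simpa [insertAt] using h0⟩

def insertMax {N : ℕ} (p : Fin (N + 1)) (τ : Perm (Fin N)) : Perm (Fin (N + 1)) :=
  (finSuccEquiv' p).trans (τ.optionCongr.trans (finSuccEquiv' (Fin.last N)).symm)

@[simp]
theorem insertMax_apply_self {N : ℕ} (p : Fin (N + 1)) (τ : Perm (Fin N)) :
    insertMax p τ p = Fin.last N := by
  simp [insertMax]

@[simp]
theorem insertMax_apply_succAbove {N : ℕ} (p : Fin (N + 1)) (τ : Perm (Fin N)) (j : Fin N) :
    insertMax p τ (p.succAbove j) = (τ j).castSucc := by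
  simp [insertMax]

theorem insertMax_injective (N : ℕ) :
    Function.Injective fun x : Fin (N + 1) × Perm (Fin N) => insertMax x.1 x.2 := by
  rintro ⟨p, τ⟩ ⟨p', τ'⟩ h
  simp only at h
  obtain rfl : p = p' :=
    (insertMax p τ).injective (by rw [insertMax_apply_self, h, insertMax_apply_self])
  refine Prod.ext rfl (Equiv.ext fun j => Fin.castSucc_injective N ?_)
  rw [← insertMax_apply_succAbove, ← insertMax_apply_succAbove, h]

noncomputable def insertMaxEquiv (N : ℕ) : Fin (N + 1) × Perm (Fin N) ≃ Perm (Fin (N + 1)) :=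
  Equiv.ofBijective _ <| (Fintype.bijective_iff_injective_and_card _).2
    ⟨insertMax_injective N, by simp [Fintype.card_perm, Nat.factorial_succ]⟩

theorem word_insertMax {N : ℕ} (p : Fin (N + 1)) (τ : Perm (Fin N)) :
    word (insertMax p τ) = insertAt (word τ) p N := by
  funext j
  unfold word insertAt
  by_cases hj : j < N + 1
  · rw [dif_pos hj]
    rcases lt_trichotomy j p with hjp | rfl | hjp
    · have hjN : j < N := by omega
      have : (⟨j, hj⟩ : Fin (N + 1)) = p.succAbove ⟨j, hjN⟩ := by
        rw [Fin.succAbove_of_castSucc_lt _ _ (by simpa [Fin.lt_def] using hjp)]; rfl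
      simp [this, hjp, hjN]
    · simp
    · have hjN : j - 1 < N := by omega
      have : (⟨j, hj⟩ : Fin (N + 1)) = p.succAbove ⟨j - 1, hjN⟩ := by
        rw [Fin.succAbove_of_le_castSucc _ _ (Fin.le_def.2 (Nat.le_sub_one_of_lt hjp))]
        ext
        show j = j - 1 + 1
        omega
      simp [this, hjN, show ¬ j < p by omega, show j ≠ p by omega]
  · simp [hj, show ¬ j < p by omega, show j ≠ p by omega, show ¬ j - 1 < N by omega]

theorem containsN1_insertMax_iff {N : ℕ} (p : Fin (N + 2)) (τ : Perm (Fin (N + 1))) :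
    containsN1 (N + 2) (insertMax p τ) ↔ p = (τ.symm 0).castSucc := by
  rw [containsN1_iff_word, word_insertMax, show N + 2 - 1 = N + 1 from rfl,
    insertAt_contains_iff (word_lt τ)]
  constructor
  · rintro ⟨hp, h0⟩
    exact Fin.ext ((word_eq_zero_iff τ hp).1 h0)
  · rintro rfl
    exact ⟨(τ.symm 0).isLt, (word_eq_zero_iff τ (τ.symm 0).isLt).2 rfl⟩

theorem avoidsSucc_insertMax_iff {N : ℕ} (τ : Perm (Fin (N + 1))) :
    avoidsSucc (N + 2) (insertMax (τ.symm 0).castSucc τ) ↔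
      avoidsSucc (N + 1) τ ∧ ¬ containsN1 (N + 1) τ := by
  rw [avoidsSucc_iff_word, avoidsSucc_iff_word, containsN1_iff_word, word_insertMax]
  exact insertAt_avoids_iff (τ.symm 0).isLt ((word_eq_zero_iff τ (τ.symm 0).isLt).2 rfl)
    fun j hj => (word_eq_zero_iff τ hj).1

theorem avoidsSucc_and_containsN1_insertMax_iff {N : ℕ} (p : Fin (N + 2))
    (τ : Perm (Fin (N + 1))) :
    avoidsSucc (N + 2) (insertMax p τ) ∧ containsN1 (N + 2) (insertMax p τ) ↔
      p = (τ.symm 0).castSucc ∧ avoidsSucc (N + 1) τ ∧ ¬ containsN1 (N + 1) τ := by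
  rw [containsN1_insertMax_iff]
  constructor
  · rintro ⟨hA, rfl⟩
    exact ⟨rfl, (avoidsSucc_insertMax_iff τ).1 hA⟩
  · rintro ⟨rfl, h⟩
    exact ⟨(avoidsSucc_insertMax_iff τ).2 h, rfl⟩

end Arrangement

open Equiv Arrangement

theorem stmt_1 (n : ℕ) (hn : 2 ≤ n) :
    Nat.card {σ : Equiv.Perm (Fin n) // avoidsSucc n σ ∧ containsN1 n σ} =
      DCount (n - 1) := by
  obtain ⟨m, rfl⟩ : ∃ m, n = m + 2 := ⟨n - 2, by omega⟩
  rw [show m + 2 - 1 = m + 1 from rfl, DCount]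
  calc Nat.card {σ : Perm (Fin (m + 2)) // avoidsSucc (m + 2) σ ∧ containsN1 (m + 2) σ}
      = Nat.card {x : Fin (m + 2) × Perm (Fin (m + 1)) //
          avoidsSucc (m + 2) (insertMax x.1 x.2) ∧ containsN1 (m + 2) (insertMax x.1 x.2)} :=
        Nat.card_congr ((insertMaxEquiv (m + 1)).subtypeEquiv fun _ => Iff.rfl).symm
    _ = Nat.card {τ : Perm (Fin (m + 1)) // avoidsSucc (m + 1) τ ∧ ¬ containsN1 (m + 1) τ} :=
        Nat.card_congr <| (subtypeEquivRight fun x : Fin (m + 2) × Perm (Fin (m + 1)) =>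
          avoidsSucc_and_containsN1_insertMax_iff x.1 x.2).trans
            (subtypeGraphEquiv (fun τ : Perm (Fin (m + 1)) => (τ.symm 0).castSucc)
              fun τ => avoidsSucc (m + 1) τ ∧ ¬ containsN1 (m + 1) τ)
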